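/- Γ₂-type lower bound: for every N ≥ 3, every energy function E_N : S_N → ℝ, every β ≥ 0, and every f : S_N → ℝ, π_N^β[ (𝒢_N^β f)² ] ≥ Σ_{a,b∈B_N, a∩b≠∅} π_N^β[ c_a c_b ∇_a f ∇_b f ] + (1/2) Σ_{a,b∈B_N, a∩b=∅} π_N^β[ c_a c_b (1 − c_b^a/c_b) ∇_a f ∇_b f ], where c_b^a(σ) = c_b(σ^a). -/

import Mathlib

/-!
Expanding the square, `π[(𝒢f)²] = Σ_{a,b} π[c_a c_b ∇_a f ∇_b f]`, so it suffices to bound the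
terms with disjoint `a, b` one at a time. For those the exchanges commute, `D = ∇_b ∇_a f` is odd
under both `σ ↦ σ^a` and `σ ↦ σ^b`, and `c_a c_b^a = c_b c_a^b`. Detailed balance in `a` and in `b`
then gives `π[c_a c_b ∇_a f ∇_b f] + π[c_a c_b^a ∇_a f ∇_b f] = ½ π[c_a c_b^a D²] ≥ 0`, which is
the termwise bound because `c_b (1 - c_b^a / c_b) = c_b - c_b^a`.
-/

open Finset Filter Topology
open scoped BigOperators

attribute [local instance] Classical.propDecidable

namespace PermGibbs

/-- The symmetric group on `{1, …, N}`. -/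
abbrev SN (N : ℕ) := Equiv.Perm (Fin N)

/-- `σ^a` for `a = {x,y}`: compose `σ` with the transposition exchanging `x` and `y`. -/
def pexch {N : ℕ} (σ : SN N) (x y : Fin N) : SN N := σ * Equiv.swap x y

/-- The gradient `∇_a f` for `a = {x,y}`. -/
def pgrad {N : ℕ} (f : SN N → ℝ) (x y : Fin N) (σ : SN N) : ℝ := f (pexch σ x y) - f σ

/-- Partition function of the Gibbs measure on `S_N`. -/
noncomputable def pZ (N : ℕ) (β : ℝ) (E : SN N → ℝ) : ℝ :=
  ∑ σ : SN N, Real.exp (-(β * E σ))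

/-- The Gibbs probability `π_N^β`. -/
noncomputable def ppi (N : ℕ) (β : ℝ) (E : SN N → ℝ) (σ : SN N) : ℝ :=
  Real.exp (-(β * E σ)) / pZ N β E

/-- Expectation with respect to `π_N^β`. -/
noncomputable def pexpect (N : ℕ) (β : ℝ) (E : SN N → ℝ) (g : SN N → ℝ) : ℝ :=
  ∑ σ : SN N, ppi N β E σ * g σ

/-- Variance with respect to `π_N^β`. -/
noncomputable def pvar (N : ℕ) (β : ℝ) (E : SN N → ℝ) (f : SN N → ℝ) : ℝ :=
  pexpect N β E (fun σ => (f σ - pexpect N β E f) ^ 2)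

/-- The rates `c_a = (1/N) exp(−(β/2) ∇_a E_N)` for `a = {x,y}`. -/
noncomputable def prate {N : ℕ} (β : ℝ) (E : SN N → ℝ) (x y : Fin N) (σ : SN N) : ℝ :=
  (1 / (N : ℝ)) * Real.exp (-(β / 2) * (E (pexch σ x y) - E σ))

/-- Dirichlet form of the generator `𝒢_N^β` (the sum over unordered pairs is
written as half the sum over ordered distinct pairs). -/
noncomputable def pDir (N : ℕ) (β : ℝ) (E : SN N → ℝ) (f : SN N → ℝ) : ℝ :=
  (1 / 2) * ((1 / 2) * ∑ x : Fin N, ∑ y : Fin N,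
    if x ≠ y then pexpect N β E (fun σ => prate β E x y σ * (pgrad f x y σ) ^ 2) else 0)

/-- The generator `𝒢_N^β` applied to `f` (sum over unordered pairs, written as a
sum over ordered pairs `x < y`). -/
noncomputable def pGen (N : ℕ) (β : ℝ) (E : SN N → ℝ) (f : SN N → ℝ) (σ : SN N) : ℝ :=
  ∑ x : Fin N, ∑ y : Fin N, if x < y then prate β E x y σ * pgrad f x y σ else 0

lemma pexch_pexch {N : ℕ} (σ : SN N) (x y : Fin N) : pexch (pexch σ x y) x y = σ := by
  simp [pexch, mul_assoc]

lemma swap_mul_swap_comm {N : ℕ} {x y u v : Fin N} (hxu : x ≠ u) (hxv : x ≠ v)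
    (hyu : y ≠ u) (hyv : y ≠ v) :
    Equiv.swap x y * Equiv.swap u v = Equiv.swap u v * Equiv.swap x y := by
  ext z
  simp only [Equiv.Perm.mul_apply, Equiv.swap_apply_def]
  split_ifs <;> simp_all

lemma pexch_comm {N : ℕ} (σ : SN N) {x y u v : Fin N} (hxu : x ≠ u) (hxv : x ≠ v)
    (hyu : y ≠ u) (hyv : y ≠ v) :
    pexch (pexch σ x y) u v = pexch (pexch σ u v) x y := by
  simp [pexch, mul_assoc, swap_mul_swap_comm hxu hxv hyu hyv]

lemma pgrad_pgrad_comm {N : ℕ} (f : SN N → ℝ) {x y u v : Fin N} (hxu : x ≠ u) (hxv : x ≠ v)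
    (hyu : y ≠ u) (hyv : y ≠ v) (σ : SN N) :
    pgrad (pgrad f x y) u v σ = pgrad (pgrad f u v) x y σ := by
  simp only [pgrad, pexch_comm σ hxu hxv hyu hyv]
  ring

lemma pgrad_pexch {N : ℕ} (f : SN N → ℝ) (x y : Fin N) (σ : SN N) :
    pgrad f x y (pexch σ x y) = -pgrad f x y σ := by
  simp [pgrad, pexch_pexch]

section Gibbs

variable {N : ℕ} (β : ℝ) (E : SN N → ℝ)

lemma pexpect_add (g h : SN N → ℝ) :
    pexpect N β E (fun σ => g σ + h σ) = pexpect N β E g + pexpect N β E h := by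
  simp [pexpect, mul_add, Finset.sum_add_distrib]

lemma pexpect_const_mul (c : ℝ) (g : SN N → ℝ) :
    pexpect N β E (fun σ => c * g σ) = c * pexpect N β E g := by
  simp only [pexpect, Finset.mul_sum]
  exact Finset.sum_congr rfl fun σ _ => by ring

lemma pexpect_sum {ι : Type*} [Fintype ι] (g : ι → SN N → ℝ) :
    pexpect N β E (fun σ => ∑ i, g i σ) = ∑ i, pexpect N β E (g i) := by
  simp only [pexpect, Finset.mul_sum]
  exact Finset.sum_comm

lemma pexpect_ite (P : Prop) [Decidable P] (g : SN N → ℝ) :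
    pexpect N β E (fun σ => if P then g σ else 0) = if P then pexpect N β E g else 0 := by
  split_ifs <;> simp [pexpect]

lemma ppi_nonneg (σ : SN N) : 0 ≤ ppi N β E σ :=
  div_nonneg (Real.exp_nonneg _) (Finset.sum_nonneg fun _ _ => Real.exp_nonneg _)

lemma pexpect_nonneg {g : SN N → ℝ} (hg : ∀ σ, 0 ≤ g σ) : 0 ≤ pexpect N β E g :=
  Finset.sum_nonneg fun σ _ => mul_nonneg (ppi_nonneg β E σ) (hg σ)

lemma prate_nonneg (x y : Fin N) (σ : SN N) : 0 ≤ prate β E x y σ := by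
  unfold prate
  positivity

/-- The quotient is junk only for `N = 0`, where all rates vanish. -/
lemma prate_mul_one_sub_div (x y : Fin N) (σ τ : SN N) :
    prate β E x y σ * (1 - prate β E x y τ / prate β E x y σ)
      = prate β E x y σ - prate β E x y τ := by
  rcases Nat.eq_zero_or_pos N with rfl | hN
  · simp [prate]
  · have : prate β E x y σ ≠ 0 := (mul_pos (by positivity) (Real.exp_pos _)).ne'
    field_simp

lemma ppi_mul_prate_pexch (x y : Fin N) (σ : SN N) :
    ppi N β E (pexch σ x y) * prate β E x y (pexch σ x y) = ppi N β E σ * prate β E x y σ := by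
  simp only [ppi, prate, pexch_pexch]
  have h : Real.exp (-(β * E (pexch σ x y))) * Real.exp (-(β / 2) * (E σ - E (pexch σ x y)))
      = Real.exp (-(β * E σ)) * Real.exp (-(β / 2) * (E (pexch σ x y) - E σ)) := by
    rw [← Real.exp_add, ← Real.exp_add]
    ring_nf
  linear_combination (1 / (N : ℝ)) / pZ N β E * h

/-- Detailed balance. -/
lemma pexpect_prate_mul_pexch (x y : Fin N) (g : SN N → ℝ) :
    pexpect N β E (fun σ => prate β E x y σ * g (pexch σ x y))
      = pexpect N β E (fun σ => prate β E x y σ * g σ) := by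
  refine Fintype.sum_equiv (Equiv.mulRight (Equiv.swap x y)) _ _ fun σ => ?_
  change _ = ppi N β E (pexch σ x y) * (prate β E x y (pexch σ x y) * g (pexch σ x y))
  linear_combination -g (pexch σ x y) * ppi_mul_prate_pexch β E x y σ

/-- Both sides are the rate of the two-step path `σ → σ^{ab}`. -/
lemma prate_mul_prate_pexch_comm {x y u v : Fin N} (hxu : x ≠ u) (hxv : x ≠ v)
    (hyu : y ≠ u) (hyv : y ≠ v) (σ : SN N) :
    prate β E u v σ * prate β E x y (pexch σ u v)
      = prate β E x y σ * prate β E u v (pexch σ x y) := by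
  simp only [prate]
  rw [← pexch_comm σ hxu hxv hyu hyv]
  have h : Real.exp (-(β / 2) * (E (pexch σ u v) - E σ)) *
        Real.exp (-(β / 2) * (E (pexch (pexch σ x y) u v) - E (pexch σ u v)))
      = Real.exp (-(β / 2) * (E (pexch σ x y) - E σ)) *
        Real.exp (-(β / 2) * (E (pexch (pexch σ x y) u v) - E (pexch σ x y))) := by
    rw [← Real.exp_add, ← Real.exp_add]
    ring_nf
  linear_combination (1 / (N : ℝ)) ^ 2 * h

end Gibbs

section Disjoint

variable {N : ℕ} (β : ℝ) (E : SN N → ℝ) (f : SN N → ℝ) {x y u v : Fin N}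

lemma pexpect_cross_add_cross_pexch (hxu : x ≠ u) (hxv : x ≠ v) (hyu : y ≠ u) (hyv : y ≠ v) :
    pexpect N β E (fun σ =>
        prate β E x y σ * prate β E u v σ * pgrad f x y σ * pgrad f u v σ)
      + pexpect N β E (fun σ =>
        prate β E x y σ * prate β E u v (pexch σ x y) * pgrad f x y σ * pgrad f u v σ)
      = (1 / 2) * pexpect N β E (fun σ =>
        prate β E x y σ * prate β E u v (pexch σ x y) * pgrad (pgrad f x y) u v σ ^ 2) := by
  set D := pgrad (pgrad f x y) u v
  have hcomm σ : pexch (pexch σ u v) x y = pexch (pexch σ x y) u v :=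
    (pexch_comm σ hxu hxv hyu hyv).symm
  have hD_x σ : D (pexch σ x y) = -D σ := by
    simp only [D, pgrad_pgrad_comm f hxu hxv hyu hyv, pgrad_pexch]
  have hD_u σ : D (pexch σ u v) = -D σ := pgrad_pexch _ u v σ
  have h1 : pexpect N β E (fun σ =>
        prate β E x y σ * prate β E u v (pexch σ x y) * pgrad f x y σ * pgrad f u v σ)
      = pexpect N β E (fun σ =>
        prate β E x y σ * (prate β E u v σ * -pgrad f x y σ * pgrad f u v (pexch σ x y))) := by
    rw [← pexpect_prate_mul_pexch]
    congr 1 with σ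
    simp only [pexch_pexch, pgrad_pexch]
    ring
  have h2 : pexpect N β E (fun σ => prate β E x y σ * (prate β E u v σ * pgrad f x y σ * D σ))
      = pexpect N β E (fun σ =>
        prate β E x y σ * prate β E u v (pexch σ x y) * pgrad f x y σ * D σ) := by
    rw [← pexpect_prate_mul_pexch]
    congr 1 with σ
    simp only [hD_x, pgrad_pexch]
    ring
  have h3 : pexpect N β E (fun σ => prate β E u v σ * (prate β E x y σ * pgrad f x y σ * D σ))
      = pexpect N β E (fun σ =>
        prate β E x y σ * prate β E u v (pexch σ x y) * -(pgrad f x y (pexch σ u v) * D σ)) := by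
    rw [← pexpect_prate_mul_pexch]
    congr 1 with σ
    rw [hD_u]
    linear_combination -pgrad f x y (pexch σ u v) * D σ *
      prate_mul_prate_pexch_comm β E hxu hxv hyu hyv σ
  have hS : pexpect N β E (fun σ =>
        prate β E x y σ * prate β E u v σ * pgrad f x y σ * pgrad f u v σ)
      + pexpect N β E (fun σ =>
        prate β E x y σ * prate β E u v (pexch σ x y) * pgrad f x y σ * pgrad f u v σ)
      = -1 * pexpect N β E (fun σ =>
        prate β E x y σ * (prate β E u v σ * pgrad f x y σ * D σ)) := by
    rw [h1, ← pexpect_add, ← pexpect_const_mul]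
    congr 1 with σ
    simp only [D, pgrad, hcomm]
    ring
  have hT : pexpect N β E (fun σ => prate β E x y σ * (prate β E u v σ * pgrad f x y σ * D σ))
      + pexpect N β E (fun σ => prate β E u v σ * (prate β E x y σ * pgrad f x y σ * D σ))
      = -1 * pexpect N β E (fun σ =>
        prate β E x y σ * prate β E u v (pexch σ x y) * D σ ^ 2) := by
    rw [h2, h3, ← pexpect_add, ← pexpect_const_mul]
    congr 1 with σ
    simp only [D, pgrad]
    ring
  have hswap : pexpect N β E (fun σ => prate β E u v σ * (prate β E x y σ * pgrad f x y σ * D σ))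
      = pexpect N β E (fun σ => prate β E x y σ * (prate β E u v σ * pgrad f x y σ * D σ)) := by
    congr 1 with σ
    ring
  linarith

lemma half_pexpect_rate_ratio_le (hxu : x ≠ u) (hxv : x ≠ v) (hyu : y ≠ u) (hyv : y ≠ v) :
    (1 / 2) * pexpect N β E (fun σ =>
        prate β E x y σ * prate β E u v σ *
          (1 - prate β E u v (pexch σ x y) / prate β E u v σ) *
          pgrad f x y σ * pgrad f u v σ)
      ≤ pexpect N β E (fun σ =>
          prate β E x y σ * prate β E u v σ * pgrad f x y σ * pgrad f u v σ) := by
  have hsplit : pexpect N β E (fun σ =>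
        prate β E x y σ * prate β E u v σ *
          (1 - prate β E u v (pexch σ x y) / prate β E u v σ) *
          pgrad f x y σ * pgrad f u v σ)
      = pexpect N β E (fun σ =>
          prate β E x y σ * prate β E u v σ * pgrad f x y σ * pgrad f u v σ)
        + -1 * pexpect N β E (fun σ =>
          prate β E x y σ * prate β E u v (pexch σ x y) * pgrad f x y σ * pgrad f u v σ) := by
    rw [← pexpect_const_mul, ← pexpect_add]
    congr 1 with σ
    rw [mul_assoc (prate β E x y σ), prate_mul_one_sub_div]
    ring
  have hsq : 0 ≤ pexpect N β E (fun σ =>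
      prate β E x y σ * prate β E u v (pexch σ x y) * pgrad (pgrad f x y) u v σ ^ 2) :=
    pexpect_nonneg β E fun σ =>
      mul_nonneg (mul_nonneg (prate_nonneg β E x y σ) (prate_nonneg β E u v _)) (sq_nonneg _)
  linarith [pexpect_cross_add_cross_pexch β E f hxu hxv hyu hyv]

end Disjoint

lemma pexpect_pGen_sq {N : ℕ} (β : ℝ) (E : SN N → ℝ) (f : SN N → ℝ) :
    pexpect N β E (fun σ => pGen N β E f σ ^ 2)
      = ∑ x : Fin N, ∑ y : Fin N, ∑ u : Fin N, ∑ v : Fin N,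
          if x < y ∧ u < v then
            pexpect N β E (fun σ =>
              prate β E x y σ * prate β E u v σ * pgrad f x y σ * pgrad f u v σ)
          else 0 := by
  simp only [pGen, sq, Finset.sum_mul]
  simp only [Finset.mul_sum, ite_zero_mul_ite_zero, pexpect_sum, pexpect_ite]
  refine Finset.sum_congr rfl fun x _ => Finset.sum_congr rfl fun y _ =>
    Finset.sum_congr rfl fun u _ => Finset.sum_congr rfl fun v _ => ?_
  congr 2 with σ
  ring

theorem gamma_two_lower_bound_general (N : ℕ) (E : SN N → ℝ) (β : ℝ) (f : SN N → ℝ) :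
    (∑ x : Fin N, ∑ y : Fin N, ∑ u : Fin N, ∑ v : Fin N,
        if x < y ∧ u < v ∧ (x = u ∨ x = v ∨ y = u ∨ y = v) then
          pexpect N β E (fun σ =>
            prate β E x y σ * prate β E u v σ * pgrad f x y σ * pgrad f u v σ)
        else 0)
      + (1 / 2) * (∑ x : Fin N, ∑ y : Fin N, ∑ u : Fin N, ∑ v : Fin N,
          if x < y ∧ u < v ∧ ¬(x = u ∨ x = v ∨ y = u ∨ y = v) then
            pexpect N β E (fun σ =>
              prate β E x y σ * prate β E u v σ *
                (1 - prate β E u v (pexch σ x y) / prate β E u v σ) *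
                pgrad f x y σ * pgrad f u v σ)
          else 0)
      ≤ pexpect N β E (fun σ => (pGen N β E f σ) ^ 2) := by
  rw [pexpect_pGen_sq]
  simp only [Finset.mul_sum, ← Finset.sum_add_distrib]
  refine Finset.sum_le_sum fun x _ => Finset.sum_le_sum fun y _ =>
    Finset.sum_le_sum fun u _ => Finset.sum_le_sum fun v _ => ?_
  by_cases hab : x < y ∧ u < v
  · by_cases hmeet : x = u ∨ x = v ∨ y = u ∨ y = v
    · simp [hab, hmeet]
    · simp only [not_or] at hmeet
      obtain ⟨hxu, hxv, hyu, hyv⟩ := hmeet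
      simpa [hab, hxu, hxv, hyu, hyv] using half_pexpect_rate_ratio_le β E f hxu hxv hyu hyv
  · simp [← and_assoc, hab]

/-- `Γ₂`-type lower bound:
`π[(𝒢f)²] ≥ Σ_{a∩b≠∅} π[c_a c_b ∇_a f ∇_b f] + (1/2) Σ_{a∩b=∅} π[c_a c_b (1 − c_b^a/c_b) ∇_a f ∇_b f]`.
Unordered pairs `a = {x,y}` are represented by ordered pairs with `x < y`. -/
theorem gamma_two_lower_bound (N : ℕ) (hN : 3 ≤ N) (E : SN N → ℝ) (β : ℝ)
    (hβ : 0 ≤ β) (f : SN N → ℝ) :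
    (∑ x : Fin N, ∑ y : Fin N, ∑ u : Fin N, ∑ v : Fin N,
        if x < y ∧ u < v ∧ (x = u ∨ x = v ∨ y = u ∨ y = v) then
          pexpect N β E (fun σ =>
            prate β E x y σ * prate β E u v σ * pgrad f x y σ * pgrad f u v σ)
        else 0)
      + (1 / 2) * (∑ x : Fin N, ∑ y : Fin N, ∑ u : Fin N, ∑ v : Fin N,
          if x < y ∧ u < v ∧ ¬(x = u ∨ x = v ∨ y = u ∨ y = v) then
            pexpect N β E (fun σ =>
              prate β E x y σ * prate β E u v σ *
                (1 - prate β E u v (pexch σ x y) / prate β E u v σ) *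
                pgrad f x y σ * pgrad f u v σ)
          else 0)
      ≤ pexpect N β E (fun σ => (pGen N β E f σ) ^ 2) :=
  gamma_two_lower_bound_general N E β f

end PermGibbs
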